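/- Let ρ : S² → ℝ be continuous and suppose there exist nonparallel unit vectors e, ē ∈ S² and continuous functions f, g : [−1,1] → ℝ with ρ(p) = f(p·e) = g(p·ē) for all p ∈ S². Then ρ is constant. -/

import Mathlib

/-! Put `c = ⟪e, ē⟫`, so `|c| < 1`. In dimension at least three there is a unit vector `w`
orthogonal to both axes, and `p = t • e + √(1 - t²) • w` is a point of the sphere with
`⟪p, e⟫ = t` and `⟪p, ē⟫ = c t`; hence `f t = g (c t)`, and symmetrically `g s = f (c s)`.
So `f t = f (c² t) = f (c²ⁿ t) → f 0` by continuity of `f` at `0`, and `ρ = f (⟪·, e⟫)` is the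
constant `f 0`. -/

open RealInnerProductSpace Set Filter Topology Module

variable {E : Type*} [NormedAddCommGroup E] [InnerProductSpace ℝ E] [FiniteDimensional ℝ E]

theorem exists_norm_eq_one_inner_eq_zero_of_two_lt_finrank (hE : 2 < finrank ℝ E) (u v : E) :
    ∃ w : E, ‖w‖ = 1 ∧ ⟪u, w⟫ = 0 ∧ ⟪v, w⟫ = 0 := by
  set K := Submodule.span ℝ (range ![u, v])
  have hK : K ≠ ⊤ := by
    intro h
    have : finrank ℝ K ≤ 2 := finrank_range_le_card ![u, v]
    rw [h, finrank_top] at this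
    omega
  obtain ⟨x, hxK, hx0⟩ := Submodule.exists_mem_ne_zero_of_ne_bot
    (mt Submodule.orthogonal_eq_bot_iff.1 hK)
  have hw : ‖x‖⁻¹ • x ∈ Kᗮ := Kᗮ.smul_mem _ hxK
  exact ⟨‖x‖⁻¹ • x, norm_smul_inv_norm hx0,
    Submodule.inner_right_of_mem_orthogonal (Submodule.subset_span (mem_range_self 0)) hw,
    Submodule.inner_right_of_mem_orthogonal (Submodule.subset_span (mem_range_self 1)) hw⟩

theorem exists_mem_sphere_inner_eq_and_inner_eq_mul (hE : 2 < finrank ℝ E) {e : E}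
    (he : ‖e‖ = 1) (v : E) {t : ℝ} (ht : t ∈ Icc (-1) 1) :
    ∃ p ∈ Metric.sphere (0 : E) 1, ⟪p, e⟫ = t ∧ ⟪p, v⟫ = ⟪e, v⟫ * t := by
  obtain ⟨w, hw, hew, hvw⟩ := exists_norm_eq_one_inner_eq_zero_of_two_lt_finrank hE e v
  have hs : √(1 - t ^ 2) ^ 2 = 1 - t ^ 2 := Real.sq_sqrt (by nlinarith [ht.1, ht.2])
  refine ⟨t • e + √(1 - t ^ 2) • w, ?_, ?_, ?_⟩
  · have hsq : ‖t • e + √(1 - t ^ 2) • w‖ ^ 2 = 1 := by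
      rw [sq, norm_add_sq_eq_norm_sq_add_norm_sq_real
        (by rw [real_inner_smul_left, real_inner_smul_right, hew]; ring),
        norm_smul, norm_smul, he, hw, Real.norm_eq_abs, Real.norm_eq_abs]
      nlinarith [sq_abs t, sq_abs √(1 - t ^ 2)]
    rw [mem_sphere_zero_iff_norm]
    exact (pow_eq_one_iff_of_nonneg (norm_nonneg _) two_ne_zero).1 hsq
  · rw [inner_add_left, real_inner_smul_left, real_inner_smul_left, real_inner_comm e w, hew,
      real_inner_self_eq_norm_sq, he]
    ring
  · rw [inner_add_left, real_inner_smul_left, real_inner_smul_left, real_inner_comm v w, hvw]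
    ring

theorem mul_mem_Icc_neg_one_one {q t : ℝ} (hq : |q| ≤ 1) (ht : t ∈ Icc (-1 : ℝ) 1) :
    q * t ∈ Icc (-1 : ℝ) 1 := by
  rw [mem_Icc, ← abs_le, abs_mul] at *
  exact mul_le_one₀ hq (abs_nonneg t) ht

theorem apply_eq_apply_zero_of_apply_mul_eq {f : ℝ → ℝ} {q : ℝ} (hq : |q| < 1)
    (hf : ContinuousWithinAt f (Icc (-1) 1) 0) (hfq : ∀ t ∈ Icc (-1 : ℝ) 1, f (q * t) = f t) :
    ∀ t ∈ Icc (-1 : ℝ) 1, f t = f 0 := by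
  intro t ht
  have hmem (n : ℕ) : q ^ n * t ∈ Icc (-1 : ℝ) 1 :=
    mul_mem_Icc_neg_one_one (by rw [abs_pow]; exact pow_le_one₀ (abs_nonneg q) hq.le) ht
  have hconst : ∀ n : ℕ, f (q ^ n * t) = f t := by
    intro n
    induction n with
    | zero => simp
    | succ n ih => rw [pow_succ', mul_assoc, hfq _ (hmem n), ih]
  have hlim : Tendsto (fun n : ℕ => q ^ n * t) atTop (𝓝[Icc (-1) 1] 0) :=
    tendsto_nhdsWithin_iff.2
      ⟨by simpa using (tendsto_pow_atTop_nhds_zero_of_abs_lt_one hq).mul_const t,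
        Eventually.of_forall hmem⟩
  refine tendsto_nhds_unique ?_ (hf.tendsto.comp hlim)
  simp only [Function.comp_def, hconst, tendsto_const_nhds]

theorem axisym_two_axes_const (ρ : EuclideanSpace ℝ (Fin 3) → ℝ)
    (e ebar : EuclideanSpace ℝ (Fin 3)) (he : ‖e‖ = 1) (hebar : ‖ebar‖ = 1)
    (hne : e ≠ ebar) (hne' : e ≠ -ebar)
    (f g : ℝ → ℝ) (hf : ContinuousOn f (Set.Icc (-1) 1))
    (hfe : ∀ p ∈ Metric.sphere (0 : EuclideanSpace ℝ (Fin 3)) 1, ρ p = f (inner ℝ p e))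
    (hge : ∀ p ∈ Metric.sphere (0 : EuclideanSpace ℝ (Fin 3)) 1, ρ p = g (inner ℝ p ebar)) :
    ∀ p ∈ Metric.sphere (0 : EuclideanSpace ℝ (Fin 3)) 1,
      ∀ q ∈ Metric.sphere (0 : EuclideanSpace ℝ (Fin 3)) 1, ρ p = ρ q := by
  have h3 : 2 < finrank ℝ (EuclideanSpace ℝ (Fin 3)) := by simp
  set c := ⟪e, ebar⟫
  have hc : |c| < 1 := by
    have hneg := (inner_lt_one_iff_real_of_norm_eq_one he (by rwa [norm_neg])).2 hne'
    rw [inner_neg_right] at hneg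
    exact abs_lt.2 ⟨by linarith, (inner_lt_one_iff_real_of_norm_eq_one he hebar).2 hne⟩
  have hfg : ∀ t ∈ Icc (-1 : ℝ) 1, f t = g (c * t) := fun t ht => by
    obtain ⟨p, hp, hpe, hpebar⟩ := exists_mem_sphere_inner_eq_and_inner_eq_mul h3 he ebar ht
    rw [← hpe, ← hfe p hp, hge p hp, hpebar, hpe]
  have hgf : ∀ s ∈ Icc (-1 : ℝ) 1, g s = f (c * s) := fun s hs => by
    obtain ⟨p, hp, hpebar, hpe⟩ := exists_mem_sphere_inner_eq_and_inner_eq_mul h3 hebar e hs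
    rw [← hpebar, ← hge p hp, hfe p hp, hpe, hpebar, real_inner_comm]
  have hcc : |c * c| < 1 := by rw [abs_mul]; nlinarith [abs_nonneg c]
  have hf0 := apply_eq_apply_zero_of_apply_mul_eq hcc (hf.continuousWithinAt (by norm_num))
    fun t ht => by
      rw [hfg t ht, hgf _ (mul_mem_Icc_neg_one_one hc.le ht), mul_assoc]
  intro p hp q hq
  rw [hfe p hp, hfe q hq, hf0 _ (real_inner_mem_Icc_of_norm_eq_one (by simpa using hp) he),
    hf0 _ (real_inner_mem_Icc_of_norm_eq_one (by simpa using hq) he)]
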